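/- Let α be a finite type, let P, P̄ : α → PMF(α) be Markov transition kernels with (1/2)·Σ_{x'∈α} |P(x)(x') − P̄(x)(x')| ≤ ε for every x ∈ α and some ε ≥ 0, let ρ_0 = ρ̄_0 be a common initial probability mass function on α, and define ρ_{k+1} = ρ_k.bind P and ρ̄_{k+1} = ρ̄_k.bind P̄. Let r : α → ℝ satisfy |r(x)| ≤ r_max for all x and some r_max ≥ 0, let 0 ≤ γ < 1, and let K ≥ 1 be an integer. Then the difference of the K-step discounted expected rewards satisfies |Σ_{i=1}^{K} γ^i·(Σ_x ρ_i(x)·r(x) − Σ_x ρ̄_i(x)·r(x))| ≤ 2·r_max·ε·Σ_{i=1}^{K} i·γ^i. -/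

import Mathlib

/-!
Write `δ(p, q)` for the total variation distance. One step of the two chains mixes a gap in the
current state distributions with a gap in the kernels: splitting
`ρ a P(a,b) - ρ' a P'(a,b) = ρ a (P(a,b) - P'(a,b)) + (ρ a - ρ' a) P'(a,b)` gives
`δ(ρ.bind P, ρ'.bind P') ≤ ε + δ(ρ, ρ')`, so the `i`-step marginals are at distance at most `i ε`.
A reward bounded by `r_max` changes its expectation by at most `2 r_max δ`, and summing the
discounted per-step gaps gives the bound.
-/

open Finset

namespace PMF

variable {α β : Type*} [Fintype α]

theorem sum_toReal_eq_one (p : PMF α) : ∑ a, (p a).toReal = 1 := by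
  have h := p.tsum_coe
  rw [tsum_fintype] at h
  rw [← ENNReal.toReal_sum fun a _ => p.apply_ne_top a, h, ENNReal.toReal_one]

theorem bind_apply_toReal (p : PMF α) (f : α → PMF β) (b : β) :
    (p.bind f b).toReal = ∑ a, (p a).toReal * (f a b).toReal := by
  rw [bind_apply, tsum_fintype,
    ENNReal.toReal_sum fun a _ => ENNReal.mul_ne_top (p.apply_ne_top a) ((f a).apply_ne_top b)]
  simp only [ENNReal.toReal_mul]

noncomputable def tvDist (p q : PMF α) : ℝ :=
  (1 / 2) * ∑ a, |(p a).toReal - (q a).toReal|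

theorem abs_bind_apply_sub_le [Fintype β] (p q : PMF α) (f g : α → PMF β) (b : β) :
    |(p.bind f b).toReal - (q.bind g b).toReal| ≤
      ∑ a, ((p a).toReal * |(f a b).toReal - (g a b).toReal| +
        |(p a).toReal - (q a).toReal| * (g a b).toReal) := by
  rw [bind_apply_toReal, bind_apply_toReal, ← sum_sub_distrib]
  refine (abs_sum_le_sum_abs _ _).trans (sum_le_sum fun a _ => ?_)
  calc |(p a).toReal * (f a b).toReal - (q a).toReal * (g a b).toReal|
      = |(p a).toReal * ((f a b).toReal - (g a b).toReal) +
          ((p a).toReal - (q a).toReal) * (g a b).toReal| := by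
        congr 1
        ring
    _ ≤ _ := by
      refine (abs_add_le _ _).trans_eq ?_
      rw [abs_mul, abs_mul, abs_of_nonneg ENNReal.toReal_nonneg,
        abs_of_nonneg ENNReal.toReal_nonneg]

theorem tvDist_bind_le [Fintype β] (p q : PMF α) (f g : α → PMF β) {δ : ℝ}
    (hfg : ∀ a, tvDist (f a) (g a) ≤ δ) :
    tvDist (p.bind f) (q.bind g) ≤ δ + tvDist p q := by
  have hsum : ∑ b, |(p.bind f b).toReal - (q.bind g b).toReal| ≤
      ∑ a, (p a).toReal * ∑ b, |(f a b).toReal - (g a b).toReal| +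
        ∑ a, |(p a).toReal - (q a).toReal| * ∑ b, (g a b).toReal := by
    refine (sum_le_sum fun b _ => abs_bind_apply_sub_le p q f g b).trans_eq ?_
    rw [sum_comm]
    simp only [sum_add_distrib, mul_sum]
  have hkernel : ∑ a, (p a).toReal * ∑ b, |(f a b).toReal - (g a b).toReal| ≤ 2 * δ :=
    calc ∑ a, (p a).toReal * ∑ b, |(f a b).toReal - (g a b).toReal|
        ≤ ∑ a, (p a).toReal * (2 * δ) := by
          gcongr with a
          have := hfg a
          unfold tvDist at this
          linarith
      _ = 2 * δ := by rw [← sum_mul, sum_toReal_eq_one, one_mul]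
  simp only [sum_toReal_eq_one, mul_one] at hsum
  unfold tvDist at *
  linarith

theorem abs_sum_mul_sub_sum_mul_le (p q : PMF α) (r : α → ℝ) {rmax : ℝ}
    (hr : ∀ a, |r a| ≤ rmax) :
    |∑ a, (p a).toReal * r a - ∑ a, (q a).toReal * r a| ≤ 2 * rmax * tvDist p q :=
  calc |∑ a, (p a).toReal * r a - ∑ a, (q a).toReal * r a|
      = |∑ a, ((p a).toReal - (q a).toReal) * r a| := by
        simp only [← sum_sub_distrib, sub_mul]
    _ ≤ ∑ a, |(p a).toReal - (q a).toReal| * rmax := by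
        refine (abs_sum_le_sum_abs _ _).trans (sum_le_sum fun a _ => ?_)
        rw [abs_mul]
        exact mul_le_mul_of_nonneg_left (hr a) (abs_nonneg _)
    _ = 2 * rmax * tvDist p q := by
        rw [tvDist, ← sum_mul]
        ring

theorem tvDist_le_mul_of_forall_bind {P P' : α → PMF α} {ε : ℝ}
    (hP : ∀ a, tvDist (P a) (P' a) ≤ ε) {ρ ρ' : ℕ → PMF α} (h0 : ρ 0 = ρ' 0)
    (hrec : ∀ k, ρ (k + 1) = (ρ k).bind P) (hrec' : ∀ k, ρ' (k + 1) = (ρ' k).bind P') (n : ℕ) :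
    tvDist (ρ n) (ρ' n) ≤ n * ε := by
  induction n with
  | zero => simp [tvDist, h0]
  | succ k ih =>
    rw [hrec, hrec']
    refine (tvDist_bind_le _ _ _ _ hP).trans ?_
    push_cast
    linarith

end PMF

theorem discounted_reward_gap_le_general
    {α : Type*} [Fintype α] (P P' : α → PMF α) (ε : ℝ)
    (hTV : ∀ x, (1 / 2) * ∑ x', |((P x) x').toReal - ((P' x) x').toReal| ≤ ε)
    (ρ₀ : PMF α) (ρ ρ' : ℕ → PMF α)
    (h0 : ρ 0 = ρ₀) (h0' : ρ' 0 = ρ₀)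
    (hrec : ∀ k, ρ (k + 1) = (ρ k).bind P)
    (hrec' : ∀ k, ρ' (k + 1) = (ρ' k).bind P')
    (r : α → ℝ) (rmax : ℝ) (hrmax : 0 ≤ rmax) (hr : ∀ x, |r x| ≤ rmax)
    (γ : ℝ) (hγ0 : 0 ≤ γ) (K : ℕ) :
    |∑ i ∈ Finset.Icc 1 K,
        γ ^ i * ((∑ x, (ρ i x).toReal * r x) - ∑ x, (ρ' i x).toReal * r x)| ≤
      2 * rmax * ε * ∑ i ∈ Finset.Icc 1 K, (i : ℝ) * γ ^ i := by
  have hstep (i : ℕ) :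
      |∑ x, (ρ i x).toReal * r x - ∑ x, (ρ' i x).toReal * r x| ≤ 2 * rmax * (i * ε) :=
    (PMF.abs_sum_mul_sub_sum_mul_le _ _ r hr).trans <| mul_le_mul_of_nonneg_left
      (PMF.tvDist_le_mul_of_forall_bind hTV (h0.trans h0'.symm) hrec hrec' i) (by positivity)
  calc _ ≤ ∑ i ∈ Icc 1 K, γ ^ i * (2 * rmax * (i * ε)) := by
        refine (abs_sum_le_sum_abs _ _).trans (sum_le_sum fun i _ => ?_)
        rw [abs_mul, abs_of_nonneg (pow_nonneg hγ0 i)]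
        exact mul_le_mul_of_nonneg_left (hstep i) (pow_nonneg hγ0 i)
    _ = _ := by
        rw [mul_sum]
        exact sum_congr rfl fun i _ => by ring

/-- Bound on the cumulative-reward part of the performance gap: with per-step
dynamics mismatch at most `ε` in total variation, common initial distribution,
reward bounded by `r_max` and discount `γ ∈ [0,1)`, the difference of `K`-step
discounted expected rewards is at most `2 r_max ε ∑_{i=1}^K i γ^i`. -/
theorem discounted_reward_gap_le
    {α : Type*} [Fintype α] (P P' : α → PMF α) (ε : ℝ) (hε : 0 ≤ ε)
    (hTV : ∀ x, (1 / 2) * ∑ x', |((P x) x').toReal - ((P' x) x').toReal| ≤ ε)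
    (ρ₀ : PMF α) (ρ ρ' : ℕ → PMF α)
    (h0 : ρ 0 = ρ₀) (h0' : ρ' 0 = ρ₀)
    (hrec : ∀ k, ρ (k + 1) = (ρ k).bind P)
    (hrec' : ∀ k, ρ' (k + 1) = (ρ' k).bind P')
    (r : α → ℝ) (rmax : ℝ) (hrmax : 0 ≤ rmax) (hr : ∀ x, |r x| ≤ rmax)
    (γ : ℝ) (hγ0 : 0 ≤ γ) (hγ1 : γ < 1) (K : ℕ) (hK : 1 ≤ K) :
    |∑ i ∈ Finset.Icc 1 K,
        γ ^ i * ((∑ x, (ρ i x).toReal * r x) - ∑ x, (ρ' i x).toReal * r x)| ≤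
      2 * rmax * ε * ∑ i ∈ Finset.Icc 1 K, (i : ℝ) * γ ^ i :=
  discounted_reward_gap_le_general P P' ε hTV ρ₀ ρ ρ' h0 h0' hrec hrec' r rmax hrmax hr γ hγ0 K
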